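/- arXiv:2206.03378 — 8 statements merged into one kernel-verified Lean document; each statement's English description precedes it below -/
import Mathlib

section
/- Let A be a finite nonempty type, β : A → ℝ a probability mass function (β(a) ≥ 0 for all a and Σ_a β(a) = 1), and Q : A → ℝ a nonnegative function with Σ_a β(a)·Q(a) > 0. Define π : A → ℝ by π(a) = Q(a)·β(a) / (Σ_{a'} Q(a')·β(a')). Then π is a probability mass function and Σ_a π(a)·Q(a) ≥ Σ_a β(a)·Q(a). -/
/-- In a bandit problem, reweighting the behavior policy `β` by nonnegative Q-values `Q`
yields a probability mass function `π` whose expected Q-value is at least that of `β`. -/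
theorem reweighted_pmf_improves {A : Type*} [Fintype A] [Nonempty A]
    (β : A → ℝ) (hβ0 : ∀ a, 0 ≤ β a) (hβ1 : ∑ a, β a = 1)
    (Q : A → ℝ) (hQ0 : ∀ a, 0 ≤ Q a) (hpos : 0 < ∑ a, β a * Q a)
    (π : A → ℝ) (hπ : ∀ a, π a = Q a * β a / ∑ a', Q a' * β a') :
    (∀ a, 0 ≤ π a) ∧ (∑ a, π a = 1) ∧ (∑ a, β a * Q a ≤ ∑ a, π a * Q a) := by
  have hSeq : (∑ a, Q a * β a) = ∑ a, β a * Q a := by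
    simp [mul_comm]
  have hS : 0 < ∑ a, Q a * β a := hSeq ▸ hpos
  refine ⟨fun a => ?_, ?_, ?_⟩
  · rw [hπ a]
    exact div_nonneg (mul_nonneg (hQ0 a) (hβ0 a)) hS.le
  · simp only [hπ]
    rw [← Finset.sum_div, div_self hS.ne']
  · have key : (∑ a, β a * Q a) ^ 2 ≤ (∑ a, β a) * ∑ a, β a * Q a ^ 2 :=
      Finset.sum_sq_le_sum_mul_sum_of_sq_eq_mul _ (fun a _ => hβ0 a)
        (fun a _ => mul_nonneg (hβ0 a) (sq_nonneg _)) (fun a _ => by ring)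
    rw [hβ1, one_mul] at key
    have h2 : (∑ a, π a * Q a) = (∑ a, β a * Q a ^ 2) / ∑ a, Q a * β a := by
      simp only [hπ, div_mul_eq_mul_div]
      rw [← Finset.sum_div]
      congr 1
      exact Finset.sum_congr rfl fun a _ => by ring
    rw [h2, le_div_iff₀ hS, hSeq, ← sq]
    exact key
end

section
/- There exist a finite action type A, probability mass functions β₁, β₂ on A (task-conditioned behavior policies), and reward functions r₁, r₂ : A → ℝ with 0 ≤ r_e(a) ≤ 1, such that, defining the averaged policy β̄(a) = (β₁(a) + β₂(a))/2 and the OCBC policy π_e(a) = r_e(a)·β̄(a) / (Σ_{a'} r_e(a')·β̄(a')) for e ∈ {1, 2}, there is a task e for which the OCBC policy is strictly suboptimal: Σ_a π_e(a)·r_e(a) < max_a r_e(a). -/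
/-- There is a two-task bandit problem in which the OCBC policy (reweighting the
equal-weight average of the two task-conditioned behavior policies by the task rewards)
is strictly suboptimal for some task: its expected return is strictly below the best
achievable return `max_a r_e(a)`. -/
theorem ocbc_can_be_suboptimal :
    ∃ (n : ℕ) (β : Fin 2 → Fin n → ℝ) (r : Fin 2 → Fin n → ℝ),
      (∀ e a, 0 ≤ β e a) ∧ (∀ e, ∑ a, β e a = 1) ∧
      (∀ e a, 0 ≤ r e a ∧ r e a ≤ 1) ∧
      ∃ (e : Fin 2) (astar : Fin n),
        (∀ a, r e a ≤ r e astar) ∧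
        (∑ a, (r e a * ((β 0 a + β 1 a) / 2)
              / ∑ a', r e a' * ((β 0 a' + β 1 a') / 2)) * r e a)
          < r e astar := by
  refine ⟨2, fun _ _ => 1/2, fun _ => ![1, 1/2], ?_, ?_, ?_, 0, 0, ?_, ?_⟩
  · intro e a; norm_num
  · intro e; simp [Fin.sum_univ_two]
  · intro e a; fin_cases a <;> norm_num
  · intro a; fin_cases a <;> norm_num
  · simp [Fin.sum_univ_two]
    norm_num
end

section
/- There exist a finite action type A, probability mass functions β₁, β₂ on A (task-conditioned behavior policies), and reward functions r₁, r₂ : A → ℝ with 0 ≤ r_e(a) ≤ 1, such that, defining the averaged policy β̄(a) = (β₁(a) + β₂(a))/2 and the OCBC policy π_e(a) = r_e(a)·β̄(a) / (Σ_{a'} r_e(a')·β̄(a')) for e ∈ {1, 2}, there is a task e for which the OCBC policy achieves strictly lower return than the behavior policy for that task: Σ_a π_e(a)·r_e(a) < Σ_a β_e(a)·r_e(a). -/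
/-- There is a two-task bandit problem in which the OCBC policy (reweighting the
equal-weight average of the two task-conditioned behavior policies by the task rewards)
achieves strictly lower return on some task than that task's own behavior policy. -/
theorem ocbc_can_be_worse_than_behavior_policy :
    ∃ (n : ℕ) (β : Fin 2 → Fin n → ℝ) (r : Fin 2 → Fin n → ℝ),
      (∀ e a, 0 ≤ β e a) ∧ (∀ e, ∑ a, β e a = 1) ∧
      (∀ e a, 0 ≤ r e a ∧ r e a ≤ 1) ∧
      ∃ e : Fin 2,
        (∑ a, (r e a * ((β 0 a + β 1 a) / 2)
              / ∑ a', r e a' * ((β 0 a' + β 1 a') / 2)) * r e a)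
          < ∑ a, β e a * r e a := by
  refine ⟨2, ![![1, 0], ![0, 1]], ![![1, 1/2], ![1, 1/2]], ?_, ?_, ?_, 0, ?_⟩
  · intro e a; fin_cases e <;> fin_cases a <;> norm_num
  · intro e; fin_cases e <;> simp [Fin.sum_univ_two]
  · intro e a; fin_cases e <;> fin_cases a <;> norm_num
  · simp [Fin.sum_univ_two]
    norm_num
end

section
/- There exist a finite action type A, reward functions r₁, r₂ : A → ℝ with 0 < r_e(a) ≤ 1, a task prior (p₁, p₂) with p₁, p₂ > 0 and p₁ + p₂ = 1, initial probability mass functions π⁰₁, π⁰₂ on A, and a task e ∈ {1, 2}, such that the iterates defined for all t ≥ 0 by β̄ᵗ(a) = p₁·πᵗ₁(a) + p₂·πᵗ₂(a) and πᵗ⁺¹_e(a) = r_e(a)·β̄ᵗ(a) / (Σ_{a'} r_e(a')·β̄ᵗ(a')) satisfy Σ_a πᵗ⁺¹_e(a)·r_e(a) < Σ_a πᵗ_e(a)·r_e(a) for every t = 0, 1, 2, …. -/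
/-- There is a two-task bandit problem, a task prior, and initial task-conditioned
policies such that iterated OCBC (averaging the current task-conditioned policies
according to the prior, then reweighting by each task's rewards) strictly *decreases*
the expected return of some task at every iteration. -/
theorem iterated_ocbc_can_decrease_returns_forever :
    ∃ (n : ℕ) (r : Fin 2 → Fin n → ℝ) (p : Fin 2 → ℝ) (π₀ : Fin 2 → Fin n → ℝ)
      (e : Fin 2),
      (∀ e' a, 0 < r e' a ∧ r e' a ≤ 1) ∧
      (∀ e', 0 < p e') ∧ (p 0 + p 1 = 1) ∧
      (∀ e' a, 0 ≤ π₀ e' a) ∧ (∀ e', ∑ a, π₀ e' a = 1) ∧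
      ∀ π : ℕ → Fin 2 → Fin n → ℝ,
        π 0 = π₀ →
        (∀ t e' a, π (t + 1) e' a
            = r e' a * (p 0 * π t 0 a + p 1 * π t 1 a)
              / ∑ a', r e' a' * (p 0 * π t 0 a' + p 1 * π t 1 a')) →
        ∀ t, (∑ a, π (t + 1) e a * r e a) < ∑ a, π t e a * r e a := by
  refine ⟨2, ![![1, 1/2], ![1/2, 1]], ![1/2, 1/2], ![![1, 0], ![1/2, 1/2]], 0,
    ?_, ?_, ?_, ?_, ?_, ?_⟩
  · intro e' a; fin_cases e' <;> fin_cases a <;> norm_num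
  · intro e'; fin_cases e' <;> norm_num
  · norm_num
  · intro e' a; fin_cases e' <;> fin_cases a <;> norm_num
  · intro e'; fin_cases e' <;> simp [Fin.sum_univ_two] <;> norm_num
  · intro π h0 hrec
    -- abbreviation: s t = π t 0 0 + π t 1 0
    -- step lemma: explicit formulas for the next iterate, given the invariant
    have step : ∀ t, (π t 0 0 + π t 0 1 = 1) → (π t 1 0 + π t 1 1 = 1) →
        (1 < π t 0 0 + π t 1 0) → (π t 0 0 + π t 1 0 < 2) →
        π (t+1) 0 0 = 2*(π t 0 0 + π t 1 0)/((π t 0 0 + π t 1 0)+2) ∧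
        π (t+1) 0 1 = (2-(π t 0 0 + π t 1 0))/((π t 0 0 + π t 1 0)+2) ∧
        π (t+1) 1 0 = (π t 0 0 + π t 1 0)/(4-(π t 0 0 + π t 1 0)) ∧
        π (t+1) 1 1 = 2*(2-(π t 0 0 + π t 1 0))/(4-(π t 0 0 + π t 1 0)) := by
      intro t hr0 hr1 hs1 hs2
      set s := π t 0 0 + π t 1 0 with hs
      have hu0 : π t 0 1 = 1 - π t 0 0 := by linarith
      have hu1 : π t 1 1 = 1 - π t 1 0 := by linarith
      have e00 := hrec t 0 0
      have e01 := hrec t 0 1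
      have e10 := hrec t 1 0
      have e11 := hrec t 1 1
      simp only [Fin.sum_univ_two, Matrix.cons_val_zero, Matrix.cons_val_one,
        Matrix.head_cons] at e00 e01 e10 e11
      rw [hu0, hu1] at e00 e01 e10 e11
      have hd0 : (1:ℝ) * (1/2 * π t 0 0 + 1/2 * π t 1 0)
          + 1/2 * (1/2 * (1 - π t 0 0) + 1/2 * (1 - π t 1 0)) = (s+2)/4 := by
        rw [hs]; ring
      have hd1 : (1/2:ℝ) * (1/2 * π t 0 0 + 1/2 * π t 1 0)
          + 1 * (1/2 * (1 - π t 0 0) + 1/2 * (1 - π t 1 0)) = (4-s)/4 := by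
        rw [hs]; ring
      have hp0 : (0:ℝ) < s + 2 := by linarith
      have hp1 : (0:ℝ) < 4 - s := by linarith
      refine ⟨?_, ?_, ?_, ?_⟩
      · rw [e00, hd0]; field_simp; ring
      · rw [e01, hd0]; field_simp; ring
      · rw [e10, hd1]; field_simp; ring
      · rw [e11, hd1]; field_simp; ring
    -- the main invariant, by induction
    have key : ∀ t, (π t 0 0 + π t 0 1 = 1) ∧ (π t 1 0 + π t 1 1 = 1) ∧
        (1 < π t 0 0 + π t 1 0) ∧ (π t 0 0 + π t 1 0 < 2) ∧
        (π (t+1) 0 0 < π t 0 0) := by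
      intro t
      induction t with
      | zero =>
          have h00 : π 0 0 0 = 1 := by rw [h0]; norm_num
          have h01 : π 0 0 1 = 0 := by rw [h0]; norm_num
          have h10 : π 0 1 0 = 1/2 := by rw [h0]; norm_num
          have h11 : π 0 1 1 = 1/2 := by rw [h0]; norm_num
          have hinv1 : π 0 0 0 + π 0 0 1 = 1 := by rw [h00, h01]; norm_num
          have hinv2 : π 0 1 0 + π 0 1 1 = 1 := by rw [h10, h11]; norm_num
          have hs1 : 1 < π 0 0 0 + π 0 1 0 := by rw [h00, h10]; norm_num
          have hs2 : π 0 0 0 + π 0 1 0 < 2 := by rw [h00, h10]; norm_num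
          obtain ⟨f00, -, -, -⟩ := step 0 hinv1 hinv2 hs1 hs2
          refine ⟨hinv1, hinv2, hs1, hs2, ?_⟩
          rw [f00, h00, h10]; norm_num
      | succ n ih =>
          obtain ⟨hr0, hr1, hs1, hs2, hdec⟩ := ih
          obtain ⟨f00, f01, f10, f11⟩ := step n hr0 hr1 hs1 hs2
          set s := π n 0 0 + π n 1 0 with hs
          have hp0 : (0:ℝ) < s + 2 := by linarith
          have hp1 : (0:ℝ) < 4 - s := by linarith
          -- new row sums
          have nr0 : π (n+1) 0 0 + π (n+1) 0 1 = 1 := by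
            rw [f00, f01]; field_simp; ring
          have nr1 : π (n+1) 1 0 + π (n+1) 1 1 = 1 := by
            rw [f10, f11]; field_simp; ring
          set s' := π (n+1) 0 0 + π (n+1) 1 0 with hs'
          have hs'eq : s' = 2*s/(s+2) + s/(4-s) := by rw [hs', f00, f10]
          -- 1 < s'
          have ns1 : 1 < s' := by
            rw [hs'eq]
            rw [div_add_div _ _ (ne_of_gt hp0) (ne_of_gt hp1), lt_div_iff₀ (by positivity)]
            nlinarith
          -- s' < s
          have nss : s' < s := by
            rw [hs'eq]
            rw [div_add_div _ _ (ne_of_gt hp0) (ne_of_gt hp1), div_lt_iff₀ (by positivity)]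
            have h1 : (0:ℝ) < s := by linarith
            nlinarith [mul_pos (mul_pos h1 (sub_pos.mpr hs1)) (show (0:ℝ) < 2 - s by linarith)]
          have ns2 : s' < 2 := lt_trans nss hs2
          -- decrease at the next step
          obtain ⟨g00, -, -, -⟩ := step (n+1) nr0 nr1 ns1 ns2
          refine ⟨nr0, nr1, ns1, ns2, ?_⟩
          rw [g00, ← hs', f00]
          have hp0' : (0:ℝ) < s' + 2 := by linarith
          rw [div_lt_div_iff₀ hp0' hp0]
          nlinarith
    -- conclude
    intro t
    obtain ⟨hr0, -, -, -, hdec⟩ := key t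
    obtain ⟨hr0', -, -, -, -⟩ := key (t+1)
    simp only [Fin.sum_univ_two, Matrix.cons_val_zero, Matrix.cons_val_one,
      Matrix.head_cons]
    nlinarith
end

section
/- Let A be a finite nonempty type, r : A → ℝ a function with 0 < r(a) ≤ 1 for all a, and π⁰ a probability mass function on A with π⁰(a) > 0 for all a. Define the iterates πᵗ⁺¹(a) = r(a)·πᵗ(a) / (Σ_{a'} r(a')·πᵗ(a')). Then the expected rewards converge to the optimum: lim_{t→∞} Σ_a πᵗ(a)·r(a) = max_a r(a). -/
open Filter

/-- Under the exact normalized OCBC update `πᵗ⁺¹(a) ∝ r(a)·πᵗ(a)` (with rewards in `(0,1]`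
and a fully supported initial policy), the expected rewards converge to the optimal
reward `max_a r(a)`. -/
theorem reward_reweighting_converges_to_max {A : Type*} [Fintype A] [Nonempty A]
    (r : A → ℝ) (hr : ∀ a, 0 < r a ∧ r a ≤ 1)
    (π : ℕ → A → ℝ) (hπ0pos : ∀ a, 0 < π 0 a) (hπ0sum : ∑ a, π 0 a = 1)
    (hrec : ∀ t a, π (t + 1) a = r a * π t a / ∑ a', r a' * π t a') :
    Tendsto (fun t => ∑ a, π t a * r a) atTop
      (nhds (Finset.univ.sup' Finset.univ_nonempty r)) := by
  classical
  set M := Finset.univ.sup' Finset.univ_nonempty r with hM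
  have hMle : ∀ a, r a ≤ M := fun a => Finset.le_sup' r (Finset.mem_univ a)
  obtain ⟨a0, -, ha0⟩ := Finset.exists_mem_eq_sup' Finset.univ_nonempty r
  have hMpos : 0 < M := by rw [hM, ha0]; exact (hr a0).1
  set S : ℕ → ℝ := fun t => ∑ a, r a ^ t * π 0 a with hS
  have hSpos : ∀ t, 0 < S t := fun t =>
    Finset.sum_pos (fun a _ => mul_pos (pow_pos (hr a).1 t) (hπ0pos a)) Finset.univ_nonempty
  have hform : ∀ t a, π t a = r a ^ t * π 0 a / S t := by
    intro t
    induction t with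
    | zero =>
      intro a
      have : S 0 = 1 := by simp [hS, hπ0sum]
      simp [this]
    | succ t ih =>
      have hsum : ∑ a', r a' * π t a' = S (t + 1) / S t := by
        calc ∑ a', r a' * π t a' = ∑ a', r a' ^ (t + 1) * π 0 a' / S t := by
              refine Finset.sum_congr rfl fun a' _ => ?_
              rw [ih a']; ring
          _ = S (t + 1) / S t := by rw [← Finset.sum_div]
      intro a
      rw [hrec t a, hsum, ih a,
        div_eq_div_iff (div_pos (hSpos (t + 1)) (hSpos t)).ne' (hSpos (t + 1)).ne']
      field_simp [(hSpos t).ne']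
      ring
  have hsumr : ∀ t, ∑ a, π t a * r a = S (t + 1) / S t := by
    intro t
    calc ∑ a, π t a * r a = ∑ a, r a ^ (t + 1) * π 0 a / S t := by
          refine Finset.sum_congr rfl fun a _ => ?_
          rw [hform t a]; ring
      _ = S (t + 1) / S t := by rw [← Finset.sum_div]
  set g : ℕ → ℝ := fun t => ∑ a, (r a / M) ^ t * π 0 a with hg
  set L : ℝ := ∑ a, (if r a = M then π 0 a else 0) with hL
  have hgL : Tendsto g atTop (nhds L) := by
    refine tendsto_finset_sum _ fun a _ => ?_
    by_cases h : r a = M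
    · simp [h, div_self hMpos.ne']
    · have h1 : 0 ≤ r a / M := div_nonneg (hr a).1.le hMpos.le
      have h2 : r a / M < 1 := (div_lt_one hMpos).mpr (lt_of_le_of_ne (hMle a) h)
      have := tendsto_pow_atTop_nhds_zero_of_lt_one h1 h2
      simpa [h] using this.mul_const (π 0 a)
  have hLpos : 0 < L := by
    refine Finset.sum_pos' (fun a _ => ?_) ⟨a0, Finset.mem_univ a0, ?_⟩
    · split_ifs with h
      exacts [(hπ0pos a).le, le_rfl]
    · rw [if_pos ha0.symm]
      exact hπ0pos a0
  have hgS : ∀ t, S t = g t * M ^ t := by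
    intro t
    rw [hg, Finset.sum_mul]
    refine Finset.sum_congr rfl fun a _ => ?_
    rw [div_pow]
    field_simp
  have hgpos : ∀ t, 0 < g t := fun t =>
    Finset.sum_pos (fun a _ => mul_pos (pow_pos (div_pos (hr a).1 hMpos) t) (hπ0pos a))
      Finset.univ_nonempty
  have hgL' : Tendsto (fun t => g (t + 1)) atTop (nhds L) :=
    hgL.comp (tendsto_add_atTop_nat 1)
  have hdiv : Tendsto (fun t => M * (g (t + 1) / g t)) atTop (nhds M) := by
    have := (hgL'.div hgL hLpos.ne').const_mul M
    simpa [div_self hLpos.ne'] using this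
  have heq : (fun t => ∑ a, π t a * r a) = fun t => M * (g (t + 1) / g t) := by
    funext t
    rw [hsumr t, hgS t, hgS (t + 1),
      div_eq_iff (mul_pos (hgpos t) (pow_pos hMpos t)).ne']
    field_simp [(hgpos t).ne']
    ring
  rw [heq]
  exact hdiv
end

section
/- Let A be a finite nonempty type, r : A → ℝ a function with 0 < r(a) ≤ 1 for all a, and π⁰ a probability mass function on A with π⁰(a) > 0 for all a. Define the iterates πᵗ⁺¹(a) = r(a)·πᵗ(a) / (Σ_{a'} r(a')·πᵗ(a')). Then the sequence of expected rewards is nondecreasing: Σ_a πᵗ⁺¹(a)·r(a) ≥ Σ_a πᵗ(a)·r(a) for every t ≥ 0. -/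
/-- Under the exact normalized OCBC update `πᵗ⁺¹(a) ∝ r(a)·πᵗ(a)` (with rewards in `(0,1]`
and a fully supported initial policy), the sequence of expected rewards is nondecreasing:
each iteration is a policy improvement step. -/
theorem reward_reweighting_is_policy_improvement {A : Type*} [Fintype A] [Nonempty A]
    (r : A → ℝ) (hr : ∀ a, 0 < r a ∧ r a ≤ 1)
    (π : ℕ → A → ℝ) (hπ0pos : ∀ a, 0 < π 0 a) (hπ0sum : ∑ a, π 0 a = 1)
    (hrec : ∀ t a, π (t + 1) a = r a * π t a / ∑ a', r a' * π t a') :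
    ∀ t, (∑ a, π t a * r a) ≤ ∑ a, π (t + 1) a * r a := by
  -- invariants: positivity and normalization
  have key : ∀ t, (∀ a, 0 < π t a) ∧ (∑ a, π t a = 1) := by
    intro t
    induction t with
    | zero => exact ⟨hπ0pos, hπ0sum⟩
    | succ t ih =>
      obtain ⟨hpos, hsum⟩ := ih
      have hS : 0 < ∑ a', r a' * π t a' :=
        Finset.sum_pos (fun a _ => mul_pos (hr a).1 (hpos a)) Finset.univ_nonempty
      constructor
      · intro a
        rw [hrec]
        exact div_pos (mul_pos (hr a).1 (hpos a)) hS
      · simp_rw [hrec t, ← Finset.sum_div, div_self (ne_of_gt hS)]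
  intro t
  obtain ⟨hpos, hsum⟩ := key t
  have hS : 0 < ∑ a', r a' * π t a' :=
    Finset.sum_pos (fun a _ => mul_pos (hr a).1 (hpos a)) Finset.univ_nonempty
  have hSeq : (∑ a', r a' * π t a') = ∑ a, π t a * r a := by
    exact Finset.sum_congr rfl fun a _ => mul_comm _ _
  -- Cauchy–Schwarz: (∑ π r)² ≤ (∑ π) (∑ π r²)
  have cs : (∑ a, π t a * r a) ^ 2 ≤ (∑ a, π t a) * ∑ a, π t a * r a ^ 2 := by
    have := Finset.sum_mul_sq_le_sq_mul_sq Finset.univ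
      (fun a => Real.sqrt (π t a)) (fun a => Real.sqrt (π t a) * r a)
    calc (∑ a, π t a * r a) ^ 2
        = (∑ a, Real.sqrt (π t a) * (Real.sqrt (π t a) * r a)) ^ 2 := by
          congr 1
          refine Finset.sum_congr rfl fun a _ => ?_
          rw [← mul_assoc, Real.mul_self_sqrt (hpos a).le]
      _ ≤ (∑ a, Real.sqrt (π t a) ^ 2) * ∑ a, (Real.sqrt (π t a) * r a) ^ 2 := this
      _ = (∑ a, π t a) * ∑ a, π t a * r a ^ 2 := by
          congr 1
          · exact Finset.sum_congr rfl fun a _ => Real.sq_sqrt (hpos a).le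
          · refine Finset.sum_congr rfl fun a _ => ?_
            rw [mul_pow, Real.sq_sqrt (hpos a).le]
  rw [hsum, one_mul] at cs
  have hrhs : ∑ a, π (t + 1) a * r a
      = (∑ a, π t a * r a ^ 2) / ∑ a, π t a * r a := by
    rw [← hSeq]
    simp_rw [hrec t, div_mul_eq_mul_div]
    rw [← Finset.sum_div]
    congr 1
    exact Finset.sum_congr rfl fun a _ => by ring
  rw [hrhs, le_div_iff₀ (hSeq ▸ hS)]
  calc (∑ a, π t a * r a) * (∑ a, π t a * r a) = (∑ a, π t a * r a) ^ 2 := by ring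
    _ ≤ _ := cs
end

section
/- Let A be a finite nonempty type, r : A → ℝ a function with 0 < r(a) ≤ 1 for all a, and π⁰ a probability mass function on A with π⁰(a) > 0 for all a. Define the iterates πᵗ⁺¹(a) = r(a)·πᵗ(a) / (Σ_{a'} r(a')·πᵗ(a')). Then for every action a with r(a) < max_{a'} r(a'), the probability mass vanishes in the limit: lim_{t→∞} πᵗ(a) = 0. -/
open Filter

/-- Under the exact normalized OCBC update `πᵗ⁺¹(a) ∝ r(a)·πᵗ(a)` (with rewards in `(0,1]`
and a fully supported initial policy), the probability of every strictly suboptimal action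
vanishes in the limit: the iterates concentrate on the reward-maximizing actions. -/
theorem reward_reweighting_suboptimal_mass_vanishes {A : Type*} [Fintype A] [Nonempty A]
    (r : A → ℝ) (hr : ∀ a, 0 < r a ∧ r a ≤ 1)
    (π : ℕ → A → ℝ) (hπ0pos : ∀ a, 0 < π 0 a) (hπ0sum : ∑ a, π 0 a = 1)
    (hrec : ∀ t a, π (t + 1) a = r a * π t a / ∑ a', r a' * π t a') :
    ∀ a, r a < Finset.univ.sup' Finset.univ_nonempty r →
      Tendsto (fun t => π t a) atTop (nhds 0) := by
  -- positivity of iterates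
  have hpos : ∀ t a, 0 < π t a := by
    intro t
    induction t with
    | zero => exact hπ0pos
    | succ t ih =>
      intro a
      have hS : 0 < ∑ a', r a' * π t a' :=
        Finset.sum_pos (fun a' _ => mul_pos (hr a').1 (ih a')) Finset.univ_nonempty
      rw [hrec]
      exact div_pos (mul_pos (hr a).1 (ih a)) hS
  have hsum : ∀ t, ∑ a, π t a = 1 := by
    intro t
    induction t with
    | zero => exact hπ0sum
    | succ t ih =>
      have hS : 0 < ∑ a', r a' * π t a' :=
        Finset.sum_pos (fun a' _ => mul_pos (hr a').1 (hpos t a')) Finset.univ_nonempty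
      calc ∑ a, π (t + 1) a = ∑ a, r a * π t a / ∑ a', r a' * π t a' := by
            simp only [hrec]
        _ = (∑ a, r a * π t a) / ∑ a', r a' * π t a' := by
            rw [Finset.sum_div]
        _ = 1 := div_self hS.ne'
  have hle1 : ∀ t a, π t a ≤ 1 := by
    intro t a
    calc π t a ≤ ∑ a', π t a' :=
          Finset.single_le_sum (fun a' _ => (hpos t a').le) (Finset.mem_univ a)
      _ = 1 := hsum t
  intro a ha
  obtain ⟨b, _, hb⟩ := Finset.exists_mem_eq_sup' Finset.univ_nonempty r
  rw [hb] at ha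
  set k : ℝ := π 0 a / π 0 b with hk
  set q : ℝ := r a / r b with hq
  have hrb : 0 < r b := (hr b).1
  have hq0 : 0 ≤ q := div_nonneg (hr a).1.le hrb.le
  have hq1 : q < 1 := (div_lt_one hrb).mpr ha
  have hk0 : 0 ≤ k := div_nonneg (hπ0pos a).le (hπ0pos b).le
  have hratio : ∀ t, π t a = π t b * k * q ^ t := by
    intro t
    induction t with
    | zero => simp [hk, hq]; rw [mul_div_cancel₀ _ (hπ0pos b).ne']
    | succ t ih =>
      have hS : (∑ a', r a' * π t a') ≠ 0 :=
        (Finset.sum_pos (fun a' _ => mul_pos (hr a').1 (hpos t a')) Finset.univ_nonempty).ne'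
      rw [hrec t a, hrec t b, ih, pow_succ, hq]
      field_simp
  have hub : ∀ t, π t a ≤ k * q ^ t := by
    intro t
    rw [hratio t]
    have : π t b * k * q ^ t ≤ 1 * k * q ^ t := by
      apply mul_le_mul_of_nonneg_right (mul_le_mul_of_nonneg_right (hle1 t b) hk0)
        (pow_nonneg hq0 t)
    simpa using this
  have hlim : Tendsto (fun t => k * q ^ t) atTop (nhds 0) := by
    have := (tendsto_pow_atTop_nhds_zero_of_lt_one hq0 hq1).const_mul k
    simpa using this
  exact squeeze_zero (fun t => (hpos t a).le) hub hlim
end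

section
/- Let A be a finite nonempty type and E a finite type of tasks. For each task e ∈ E, let β_e be a probability mass function on A (the task-conditioned behavior policy) and Q_e : A → ℝ a nonnegative function (the task's Q-values) with Σ_a β_e(a)·Q_e(a) > 0. Define, for each task e, the normalized-OCBC policy π̃_e(a) = Q_e(a)·β_e(a) / (Σ_{a'} Q_e(a')·β_e(a')). Then for every task e simultaneously, Σ_a π̃_e(a)·Q_e(a) ≥ Σ_a β_e(a)·Q_e(a). -/
/-- Normalized OCBC performs policy improvement for every task simultaneously: reweighting
each task's own behavior policy `β_e` by that task's nonnegative Q-values `Q_e` yields a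
policy whose expected Q-value is at least that of `β_e`, for every task `e`. -/
theorem normalized_ocbc_improves_every_task {A E : Type*} [Fintype A] [Nonempty A]
    [Fintype E]
    (β : E → A → ℝ) (hβ0 : ∀ e a, 0 ≤ β e a) (hβ1 : ∀ e, ∑ a, β e a = 1)
    (Q : E → A → ℝ) (hQ0 : ∀ e a, 0 ≤ Q e a) (hpos : ∀ e, 0 < ∑ a, β e a * Q e a)
    (πt : E → A → ℝ)
    (hπ : ∀ e a, πt e a = Q e a * β e a / ∑ a', Q e a' * β e a') :
    ∀ e, (∑ a, β e a * Q e a) ≤ ∑ a, πt e a * Q e a := by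
  intro e
  have hS : (∑ a, Q e a * β e a) = ∑ a, β e a * Q e a := by
    simp [mul_comm]
  have hSpos : 0 < ∑ a, Q e a * β e a := hS ▸ hpos e
  have hrhs : (∑ a, πt e a * Q e a) = (∑ a, β e a * Q e a ^ 2) / ∑ a, Q e a * β e a := by
    rw [Finset.sum_div]
    apply Finset.sum_congr rfl
    intro a _
    rw [hπ e a]
    ring
  rw [hrhs, le_div_iff₀ hSpos, hS]
  have := Finset.sum_sq_le_sum_mul_sum_of_sq_eq_mul (Finset.univ : Finset A)
    (r := fun a => β e a * Q e a) (f := fun a => β e a) (g := fun a => β e a * Q e a ^ 2)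
    (fun a _ => hβ0 e a) (fun a _ => mul_nonneg (hβ0 e a) (sq_nonneg _))
    (fun a _ => by ring)
  calc (∑ a, β e a * Q e a) * ∑ a, β e a * Q e a = (∑ a, β e a * Q e a) ^ 2 := by ring
    _ ≤ (∑ a, β e a) * ∑ a, β e a * Q e a ^ 2 := this
    _ = ∑ a, β e a * Q e a ^ 2 := by rw [hβ1 e, one_mul]
end
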